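/- arXiv:0805.0367 — 4 statements merged into one kernel-verified Lean document; each statement's English description precedes it below -/
import Mathlib

section
/- Let (G,·) be an S-loop with S-subgroup (H,·) and let f,g∈H. Then the Smarandache f,g-principal isotope (G,∘), defined by x∘y = xR_g⁻¹ · yL_f⁻¹, is itself an S-loop: H is closed under ∘ and (H,∘) is a nontrivial proper subgroup of the loop (G,∘). -/
/-- A loop: a quasigroup with a two-sided identity element. -/
structure Loop (G : Type*) where
  mul : G → G → G
  e : G
  one_mul : ∀ x, mul e x = x
  mul_one : ∀ x, mul x e = x
  exU_right : ∀ a b, ∃! x, mul a x = b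
  exU_left : ∀ a b, ∃! y, mul y a = b

namespace Loop

variable {G : Type*}

theorem mulRight_bijective (L : Loop G) (a : G) :
    Function.Bijective (fun y => L.mul y a) := by
  constructor
  · intro x y hxy
    obtain ⟨z, hz, huniq⟩ := L.exU_left a (L.mul x a)
    exact (huniq x rfl).trans (huniq y (by simpa using hxy.symm)).symm
  · intro b
    obtain ⟨z, hz, -⟩ := L.exU_left a b
    exact ⟨z, hz⟩

theorem mulLeft_bijective (L : Loop G) (a : G) :
    Function.Bijective (fun y => L.mul a y) := by
  constructor
  · intro x y hxy
    obtain ⟨z, hz, huniq⟩ := L.exU_right a (L.mul a x)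
    exact (huniq x rfl).trans (huniq y (by simpa using hxy.symm)).symm
  · intro b
    obtain ⟨z, hz, -⟩ := L.exU_right a b
    exact ⟨z, hz⟩

/-- The right translation `R_a : y ↦ y · a`, as a permutation of `G`. -/
noncomputable def Rt (L : Loop G) (a : G) : Equiv.Perm G :=
  Equiv.ofBijective _ (L.mulRight_bijective a)

/-- The left translation `L_a : y ↦ a · y`, as a permutation of `G`. -/
noncomputable def Lt (L : Loop G) (a : G) : Equiv.Perm G :=
  Equiv.ofBijective _ (L.mulLeft_bijective a)

/-- `(U, V, W)` is an autotopism of `L` iff `xU · yV = (x·y)W` for all `x, y`. -/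
def IsAutotopism (L : Loop G) (U V W : Equiv.Perm G) : Prop :=
  ∀ x y, L.mul (U x) (V y) = W (L.mul x y)

/-- The set of autotopism triples of a loop. -/
def AUTset (L : Loop G) : Set (Equiv.Perm G × Equiv.Perm G × Equiv.Perm G) :=
  {T | L.IsAutotopism T.1 T.2.1 T.2.2}

/-- The Bryant–Schneider set: all special maps of the loop. -/
def BSset (L : Loop G) : Set (Equiv.Perm G) :=
  {θ | ∃ f g : G, L.IsAutotopism (θ.trans (L.Rt g)⁻¹) (θ.trans (L.Lt f)⁻¹) θ}

/-- `SSYM`: the bijections of `G` mapping `H` into itself. -/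
def SSYMset (H : Set G) : Set (Equiv.Perm G) :=
  {θ | ∀ h ∈ H, θ h ∈ H}

/-- The Smarandache Bryant–Schneider set relative to the S-subgroup `H`. -/
def SBSset (L : Loop G) (H : Set G) : Set (Equiv.Perm G) :=
  {θ | (∀ h ∈ H, θ h ∈ H) ∧
    ∃ f ∈ H, ∃ g ∈ H, L.IsAutotopism (θ.trans (L.Rt g)⁻¹) (θ.trans (L.Lt f)⁻¹) θ}

/-- `H` is an S-subgroup of the loop `L`: a nontrivial proper subgroup. -/
structure IsSSubgroup (L : Loop G) (H : Set G) : Prop where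
  nontrivial : ∃ a ∈ H, a ≠ L.e
  proper : H ≠ Set.univ
  one_mem : L.e ∈ H
  mul_mem : ∀ a ∈ H, ∀ b ∈ H, L.mul a b ∈ H
  inv_mem : ∀ a ∈ H, ∃ b ∈ H, L.mul a b = L.e ∧ L.mul b a = L.e
  mul_assoc : ∀ a ∈ H, ∀ b ∈ H, ∀ c ∈ H, L.mul (L.mul a b) c = L.mul a (L.mul b c)

/-- The multiplication `x ∘ y = xR_g⁻¹ · yL_f⁻¹` of the `f,g`-principal isotope. -/
noncomputable def isoMul (L : Loop G) (f g : G) (x y : G) : G :=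
  L.mul ((L.Rt g)⁻¹ x) ((L.Lt f)⁻¹ y)

/-- The middle nucleus `N_μ` of a loop. -/
def middleNucleus (L : Loop G) : Set G :=
  {g | ∀ x y, L.mul x (L.mul g y) = L.mul (L.mul x g) y}

/-- `Ω(G,·)`: autotopisms of the form `(θR_g⁻¹, θL_f⁻¹, θ)` with `f, g ∈ H` and
`θ` mapping `H` into itself. -/
def OmegaSet (L : Loop G) (H : Set G) :
    Set (Equiv.Perm G × Equiv.Perm G × Equiv.Perm G) :=
  {T | (∀ h ∈ H, T.2.2 h ∈ H) ∧
    ∃ f ∈ H, ∃ g ∈ H, T.1 = T.2.2.trans (L.Rt g)⁻¹ ∧ T.2.1 = T.2.2.trans (L.Lt f)⁻¹ ∧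
      L.IsAutotopism T.1 T.2.1 T.2.2}

/-- The Smarandache automorphism set `SA(G,·)` relative to `H`. -/
def SAset (L : Loop G) (H : Set G) : Set (Equiv.Perm G) :=
  {θ | (∀ h ∈ H, θ h ∈ H) ∧ ∀ x y, θ (L.mul x y) = L.mul (θ x) (θ y)}

/-- `θ` is an S-isomorphism from `(L, H)` onto `(M, H')`. -/
def IsSIso (L M : Loop G) (H H' : Set G) (θ : Equiv.Perm G) : Prop :=
  (∀ h ∈ H, θ h ∈ H') ∧ ∀ x y, θ (L.mul x y) = M.mul (θ x) (θ y)

/-- `Θ(G,·)`: the pairs `(f,g) ∈ H × H` such that the Smarandache `f,g`-principal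
isotope of `L` is S-isomorphic to `L`. -/
def ThetaSet (L : Loop G) (H : Set G) : Set (G × G) :=
  {p | p.1 ∈ H ∧ p.2 ∈ H ∧
    ∃ M : Loop G, M.mul = L.isoMul p.1 p.2 ∧ ∃ θ : Equiv.Perm G, IsSIso M L H H θ}

/-- A GS-loop: an S-loop that is S-isomorphic to every S-loop isotope of itself. -/
def IsGSLoop (L : Loop G) (H : Set G) : Prop :=
  ∀ M : Loop G,
    (∃ U V W : Equiv.Perm G, ∀ x y, M.mul (U x) (V y) = W (L.mul x y)) →
    (∃ H' : Set G, M.IsSSubgroup H') →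
    ∃ H' : Set G, M.IsSSubgroup H' ∧ ∃ θ : Equiv.Perm G, IsSIso L M H H' θ

end Loop

/-!
Inside the group `H` the inverse translations are `x ↦ x g⁻¹` and `y ↦ f⁻¹ y`, so on `H` the
isotope operation is `x ∘ y = x g⁻¹ f⁻¹ y`. It is associative with identity `f g`, and `a` has
the two-sided inverse `(f g) a⁻¹ (f g)`. Since `H` has two distinct elements, it still has one
different from the new identity `f g`.
-/

namespace Loop

variable {G : Type*}

theorem Rt_inv_mul (L : Loop G) (a y : G) : (L.Rt a)⁻¹ (L.mul y a) = y :=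
  (L.Rt a).symm_apply_apply y

theorem Lt_inv_mul (L : Loop G) (a y : G) : (L.Lt a)⁻¹ (L.mul a y) = y :=
  (L.Lt a).symm_apply_apply y

theorem isoMul_mul_left (L : Loop G) (f g y : G) : L.isoMul f g (L.mul f g) y = y := by
  rw [isoMul, Rt_inv_mul]
  exact (L.Lt f).apply_symm_apply y

theorem isoMul_mul_right (L : Loop G) (f g x : G) : L.isoMul f g x (L.mul f g) = x := by
  rw [isoMul, Lt_inv_mul]
  exact (L.Rt g).apply_symm_apply x

noncomputable def principalIsotope (L : Loop G) (f g : G) : Loop G where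
  mul := L.isoMul f g
  e := L.mul f g
  one_mul := L.isoMul_mul_left f g
  mul_one := L.isoMul_mul_right f g
  exU_right _ b := ((L.Lt f)⁻¹).existsUnique_congr_right.mpr (L.exU_right _ b)
  exU_left _ b := ((L.Rt g)⁻¹).existsUnique_congr_right.mpr (L.exU_left _ b)

theorem e_eq_of_mul_eq_isoMul {L M : Loop G} {f g : G} (hM : M.mul = L.isoMul f g) :
    M.e = L.mul f g :=
  calc M.e = M.mul M.e (L.mul f g) := by rw [hM, isoMul_mul_right]
    _ = L.mul f g := M.one_mul _

namespace IsSSubgroup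

variable {L : Loop G} {H : Set G}

noncomputable abbrev group (hH : L.IsSSubgroup H) : Group H where
  mul a b := ⟨L.mul a b, hH.mul_mem _ a.2 _ b.2⟩
  one := ⟨L.e, hH.one_mem⟩
  inv a := ⟨(hH.inv_mem a a.2).choose, (hH.inv_mem a a.2).choose_spec.1⟩
  mul_assoc a b c := Subtype.ext (hH.mul_assoc _ a.2 _ b.2 _ c.2)
  one_mul a := Subtype.ext (L.one_mul a)
  mul_one a := Subtype.ext (L.mul_one a)
  inv_mul_cancel a := Subtype.ext (hH.inv_mem a a.2).choose_spec.2.2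

theorem isoMul_coe (hH : L.IsSSubgroup H) (f g a b : H) :
    letI := hH.group
    L.isoMul f g a b = ↑(a * g⁻¹ * (f⁻¹ * b)) := by
  let _ := hH.group
  have hRt : (L.Rt g)⁻¹ a = ↑(a * g⁻¹) := by
    rw [← congrArg Subtype.val (inv_mul_cancel_right a g)]
    exact L.Rt_inv_mul _ _
  have hLt : (L.Lt f)⁻¹ b = ↑(f⁻¹ * b) := by
    rw [← congrArg Subtype.val (mul_inv_cancel_left f b)]
    exact L.Lt_inv_mul _ _
  rw [isoMul, hRt, hLt]
  rfl

theorem isoMul_mem (hH : L.IsSSubgroup H) (f g a b : H) : L.isoMul f g a b ∈ H := by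
  rw [hH.isoMul_coe]
  exact Subtype.coe_prop _

theorem isoMul_assoc (hH : L.IsSSubgroup H) (f g a b c : H) :
    L.isoMul f g (L.isoMul f g a b) c = L.isoMul f g a (L.isoMul f g b c) := by
  let _ := hH.group
  simp only [hH.isoMul_coe]
  congr 1
  group

theorem exists_isoMul_inv (hH : L.IsSSubgroup H) (f g a : H) :
    ∃ b ∈ H, L.isoMul f g a b = L.mul f g ∧ L.isoMul f g b a = L.mul f g := by
  let _ := hH.group
  refine ⟨↑(f * g * a⁻¹ * f * g), Subtype.coe_prop _, ?_, ?_⟩ <;>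
  · rw [hH.isoMul_coe]
    change _ = ((f * g : H) : G)
    congr 1
    group

theorem set_nontrivial (hH : L.IsSSubgroup H) : H.Nontrivial :=
  let ⟨a, ha, hne⟩ := hH.nontrivial
  ⟨a, ha, L.e, hH.one_mem, hne⟩

theorem of_mul_eq_isoMul (hH : L.IsSSubgroup H) {M : Loop G} {f g : G} (hf : f ∈ H)
    (hg : g ∈ H) (hM : M.mul = L.isoMul f g) : M.IsSSubgroup H where
  nontrivial := hH.set_nontrivial.exists_ne M.e
  proper := hH.proper
  one_mem := e_eq_of_mul_eq_isoMul hM ▸ hH.mul_mem f hf g hg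
  mul_mem a ha b hb := hM ▸ hH.isoMul_mem ⟨f, hf⟩ ⟨g, hg⟩ ⟨a, ha⟩ ⟨b, hb⟩
  inv_mem a ha := by
    rw [hM, e_eq_of_mul_eq_isoMul hM]
    exact hH.exists_isoMul_inv ⟨f, hf⟩ ⟨g, hg⟩ ⟨a, ha⟩
  mul_assoc a ha b hb c hc := by
    rw [hM]
    exact hH.isoMul_assoc ⟨f, hf⟩ ⟨g, hg⟩ ⟨a, ha⟩ ⟨b, hb⟩ ⟨c, hc⟩

end IsSSubgroup

end Loop

/-- Let `(G,·)` be an S-loop with S-subgroup `(H,·)` and let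
`f, g ∈ H`. Then the Smarandache `f,g`-principal isotope `(G,∘)`, defined by
`x ∘ y = xR_g⁻¹ · yL_f⁻¹`, is itself an S-loop: `H` is closed under `∘` and
`(H,∘)` is a nontrivial proper subgroup of the loop `(G,∘)`. -/
theorem smarandache_principal_isotope_isSLoop {G : Type*} (L : Loop G) (H : Set G)
    (hH : L.IsSSubgroup H) (f g : G) (hf : f ∈ H) (hg : g ∈ H) :
    (∃ M : Loop G, M.mul = L.isoMul f g) ∧
      ∀ M : Loop G, M.mul = L.isoMul f g → M.IsSSubgroup H :=
  ⟨⟨L.principalIsotope f g, rfl⟩, fun _ hM => hH.of_mul_eq_isoMul hf hg hM⟩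
end

section
/- Let (G,·) be an S-loop with S-subgroup (H,·), let f,g∈H, and let (G,∘) be the Smarandache f,g-principal isotope of (G,·) (an S-loop with S-subgroup (H,∘)). Then SBS(G,·) = SBS(G,∘), where each SBS group is taken relative to the S-subgroup H. -/
/-!
Write `x ∘ y = xα⁻¹ · yβ⁻¹` with `α = R_g`, `β = L_f`. Conjugating the first two components by
`α` and `β` turns autotopisms `(U, V, W)` of `(G,·)` into autotopisms `(α⁻¹Uα, β⁻¹Vβ, W)` of
`(G,∘)` with the same third component. In any loop the first two components of an autotopism are
determined by the third, `U = W R_{eV}⁻¹` and `V = W L_{eU}⁻¹`, so `θ ∈ SBS` exactly when `θ` is the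
third component of an autotopism all of whose components map `H` into `H`. As `f, g ∈ H`, the maps
`α, β` and their inverses preserve `H`, which is also a subloop of `(G,∘)`, so this description is
the same for both loops.
-/

namespace Loop

open Equiv Set

variable {G : Type*}

@[simp]
theorem Rt_apply (L : Loop G) (a x : G) : L.Rt a x = L.mul x a := rfl

@[simp]
theorem Lt_apply (L : Loop G) (a x : G) : L.Lt a x = L.mul a x := rfl

structure IsSubloop (L : Loop G) (H : Set G) : Prop where
  one_mem : L.e ∈ H
  mul_mem {a b : G} : a ∈ H → b ∈ H → L.mul a b ∈ H
  rdiv_mem {a b : G} : a ∈ H → b ∈ H → (L.Rt a)⁻¹ b ∈ H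
  ldiv_mem {a b : G} : a ∈ H → b ∈ H → (L.Lt a)⁻¹ b ∈ H

theorem IsSSubgroup.isSubloop {L : Loop G} {H : Set G} (hH : L.IsSSubgroup H) :
    L.IsSubloop H where
  one_mem := hH.one_mem
  mul_mem ha hb := hH.mul_mem _ ha _ hb
  rdiv_mem {a b} ha hb := by
    obtain ⟨a', ha', -, ha'a⟩ := hH.inv_mem a ha
    have : (L.Rt a)⁻¹ b = L.mul b a' := by
      rw [Perm.inv_eq_iff_eq, Rt_apply, hH.mul_assoc b hb a' ha' a ha, ha'a, L.mul_one]
    exact this ▸ hH.mul_mem b hb a' ha'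
  ldiv_mem {a b} ha hb := by
    obtain ⟨a', ha', haa', -⟩ := hH.inv_mem a ha
    have : (L.Lt a)⁻¹ b = L.mul a' b := by
      rw [Perm.inv_eq_iff_eq, Lt_apply, ← hH.mul_assoc a ha a' ha' b hb, haa', L.one_mul]
    exact this ▸ hH.mul_mem a' ha' b hb

def IsSAutotopism (L : Loop G) (H : Set G) (U V W : Perm G) : Prop :=
  MapsTo U H H ∧ MapsTo V H H ∧ MapsTo W H H ∧ L.IsAutotopism U V W

theorem IsAutotopism.eq_trans_Rt_inv {L : Loop G} {U V W : Perm G} (h : L.IsAutotopism U V W) :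
    U = W.trans (L.Rt (V L.e))⁻¹ := by
  ext x
  rw [trans_apply, Perm.eq_inv_iff_eq, Rt_apply, h, L.mul_one]

theorem IsAutotopism.eq_trans_Lt_inv {L : Loop G} {U V W : Perm G} (h : L.IsAutotopism U V W) :
    V = W.trans (L.Lt (U L.e))⁻¹ := by
  ext y
  rw [trans_apply, Perm.eq_inv_iff_eq, Lt_apply, h, L.one_mul]

theorem mem_SBSset_iff {L : Loop G} {H : Set G} (hH : L.IsSubloop H) {θ : Perm G} :
    θ ∈ L.SBSset H ↔ ∃ U V, L.IsSAutotopism H U V θ := by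
  constructor
  · rintro ⟨hθ, f, hf, g, hg, hA⟩
    exact ⟨θ.trans (L.Rt g)⁻¹, θ.trans (L.Lt f)⁻¹, fun _ hx => hH.rdiv_mem hg (hθ _ hx),
      fun _ hx => hH.ldiv_mem hf (hθ _ hx), hθ, hA⟩
  · rintro ⟨U, V, hU, hV, hθ, hA⟩
    refine ⟨hθ, U L.e, hU hH.one_mem, V L.e, hV hH.one_mem, ?_⟩
    rwa [← hA.eq_trans_Rt_inv, ← hA.eq_trans_Lt_inv]

variable {L M : Loop G} {α β : Perm G}

theorem e_eq_of_isotope (hM : ∀ x y, M.mul x y = L.mul (α⁻¹ x) (β⁻¹ y)) : M.e = α (β L.e) := by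
  have h := M.one_mul (β L.e)
  simp only [hM, Perm.coe_inv, symm_apply_apply, mul_one] at h
  exact α.symm_apply_eq.mp h

theorem Rt_eq_of_isotope (hM : ∀ x y, M.mul x y = L.mul (α⁻¹ x) (β⁻¹ y)) (a : G) :
    M.Rt a = L.Rt (β⁻¹ a) * α⁻¹ := by
  ext x
  simp [hM]

theorem Lt_eq_of_isotope (hM : ∀ x y, M.mul x y = L.mul (α⁻¹ x) (β⁻¹ y)) (a : G) :
    M.Lt a = L.Lt (α⁻¹ a) * β⁻¹ := by
  ext y
  simp [hM]

theorem IsSubloop.of_isotope {H : Set G} (hH : L.IsSubloop H)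
    (hM : ∀ x y, M.mul x y = L.mul (α⁻¹ x) (β⁻¹ y)) (hα : MapsTo α H H)
    (hα' : MapsTo ⇑α⁻¹ H H) (hβ : MapsTo β H H) (hβ' : MapsTo ⇑β⁻¹ H H) : M.IsSubloop H where
  one_mem := e_eq_of_isotope hM ▸ hα (hβ hH.one_mem)
  mul_mem ha hb := hM _ _ ▸ hH.mul_mem (hα' ha) (hβ' hb)
  rdiv_mem ha hb := by
    rw [Rt_eq_of_isotope hM, mul_inv_rev, inv_inv, Perm.mul_apply]
    exact hα (hH.rdiv_mem (hβ' ha) hb)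
  ldiv_mem ha hb := by
    rw [Lt_eq_of_isotope hM, mul_inv_rev, inv_inv, Perm.mul_apply]
    exact hβ (hH.ldiv_mem (hα' ha) hb)

theorem isAutotopism_conj_iff_of_isotope (hM : ∀ x y, M.mul x y = L.mul (α⁻¹ x) (β⁻¹ y))
    {U V W : Perm G} :
    M.IsAutotopism (α * U * α⁻¹) (β * V * β⁻¹) W ↔ L.IsAutotopism U V W := by
  constructor
  · intro h x y
    simpa [hM] using h (α x) (β y)
  · intro h x y
    simpa [hM] using h (α⁻¹ x) (β⁻¹ y)

theorem isSAutotopism_conj_iff_of_isotope {H : Set G}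
    (hM : ∀ x y, M.mul x y = L.mul (α⁻¹ x) (β⁻¹ y)) (hα : MapsTo α H H)
    (hα' : MapsTo ⇑α⁻¹ H H) (hβ : MapsTo β H H) (hβ' : MapsTo ⇑β⁻¹ H H) {U V W : Perm G} :
    M.IsSAutotopism H (α * U * α⁻¹) (β * V * β⁻¹) W ↔ L.IsSAutotopism H U V W := by
  rw [IsSAutotopism, IsSAutotopism, isAutotopism_conj_iff_of_isotope hM]
  refine and_congr ⟨fun hU x hx => ?_, fun hU => hα.comp (hU.comp hα')⟩
    (and_congr ⟨fun hV x hx => ?_, fun hV => hβ.comp (hV.comp hβ')⟩ Iff.rfl)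
  · simpa using hα' (hU (hα hx))
  · simpa using hβ' (hV (hβ hx))

theorem exists_isSAutotopism_iff_of_isotope {H : Set G}
    (hM : ∀ x y, M.mul x y = L.mul (α⁻¹ x) (β⁻¹ y)) (hα : MapsTo α H H)
    (hα' : MapsTo ⇑α⁻¹ H H) (hβ : MapsTo β H H) (hβ' : MapsTo ⇑β⁻¹ H H) {W : Perm G} :
    (∃ U V, M.IsSAutotopism H U V W) ↔ ∃ U V, L.IsSAutotopism H U V W := by
  simp only [← isSAutotopism_conj_iff_of_isotope hM hα hα' hβ hβ']
  constructor
  · rintro ⟨U, V, h⟩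
    exact ⟨α⁻¹ * U * α, β⁻¹ * V * β, by simpa [mul_assoc] using h⟩
  · rintro ⟨U, V, h⟩
    exact ⟨_, _, h⟩

end Loop

/-- Let `(G,·)` be an S-loop with S-subgroup `(H,·)`, let
`f, g ∈ H`, and let `(G,∘)` be the Smarandache `f,g`-principal isotope of `(G,·)`.
Then `SBS(G,·) = SBS(G,∘)`, both taken relative to the S-subgroup `H`. -/
theorem SBS_eq_SBS_isotope {G : Type*} (L : Loop G) (H : Set G) (hH : L.IsSSubgroup H)
    (f g : G) (hf : f ∈ H) (hg : g ∈ H) (M : Loop G) (hM : M.mul = L.isoMul f g) :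
    L.SBSset H = M.SBSset H := by
  have hL : L.IsSubloop H := hH.isSubloop
  have hM' : ∀ x y, M.mul x y = L.mul ((L.Rt g)⁻¹ x) ((L.Lt f)⁻¹ y) := by
    simp only [hM, Loop.isoMul, implies_true]
  have hα : Set.MapsTo (L.Rt g) H H := fun _ hx => hL.mul_mem hx hg
  have hα' : Set.MapsTo ⇑(L.Rt g)⁻¹ H H := fun _ hx => hL.rdiv_mem hg hx
  have hβ : Set.MapsTo (L.Lt f) H H := fun _ hx => hL.mul_mem hf hx
  have hβ' : Set.MapsTo ⇑(L.Lt f)⁻¹ H H := fun _ hx => hL.ldiv_mem hf hx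
  ext θ
  rw [Loop.mem_SBSset_iff hL, Loop.mem_SBSset_iff (hL.of_isotope hM' hα hα' hβ hβ'),
    Loop.exists_isSAutotopism_iff_of_isotope hM' hα hα' hβ hβ']
end

section
/- Let (G,·) be a Smarandache loop with a fixed S-subgroup H, and let Φ: Ω(G,·) → SBS(G,·) be the homomorphism sending each autotopism triple (θR_g⁻¹, θL_f⁻¹, θ)∈Ω(G,·) to θ. Then a triple A = (θR_g⁻¹, θL_f⁻¹, θ)∈Ω(G,·) with f,g∈H lies in ker Φ if and only if θ is the identity map on G, g·f equals the identity element of (G,·), and g lies in the middle nucleus N_μ(G,·). -/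
namespace Loop

variable {G : Type*} (L : Loop G)

@[simp]
theorem Rt_inv_apply_mul (a g : G) : (L.Rt g)⁻¹ (L.mul a g) = a :=
  (L.Rt g).symm_apply_apply a

@[simp]
theorem Lt_inv_apply_mul (f b : G) : (L.Lt f)⁻¹ (L.mul f b) = b :=
  (L.Lt f).symm_apply_apply b

variable {L} {f g : G}

namespace IsAutotopism

theorem mul_eq_mul_mul_mul (hA : L.IsAutotopism (L.Rt g)⁻¹ (L.Lt f)⁻¹ 1) (a b : G) :
    L.mul a b = L.mul (L.mul a g) (L.mul f b) := by
  simpa using hA (L.mul a g) (L.mul f b)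

theorem mul_eq_e (hA : L.IsAutotopism (L.Rt g)⁻¹ (L.Lt f)⁻¹ 1) : L.mul g f = L.e := by
  simpa [L.one_mul, L.mul_one] using (hA.mul_eq_mul_mul_mul L.e L.e).symm

theorem mul_mul_cancel (hA : L.IsAutotopism (L.Rt g)⁻¹ (L.Lt f)⁻¹ 1) (y : G) :
    L.mul f (L.mul g y) = y := by
  have hgf : ∀ b, L.mul g (L.mul f b) = b := fun b => by
    simpa [L.one_mul] using (hA.mul_eq_mul_mul_mul L.e b).symm
  exact (L.mulLeft_bijective g).1 (hgf (L.mul g y))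

theorem mem_middleNucleus (hA : L.IsAutotopism (L.Rt g)⁻¹ (L.Lt f)⁻¹ 1) :
    g ∈ L.middleNucleus := fun x y => by
  simpa [hA.mul_mul_cancel] using hA.mul_eq_mul_mul_mul x (L.mul g y)

end IsAutotopism

end Loop

theorem mem_ker_iff_general {G : Type*} (L : Loop G)
    (f g : G) (θ : Equiv.Perm G)
    (hA : L.IsAutotopism (θ.trans (L.Rt g)⁻¹) (θ.trans (L.Lt f)⁻¹) θ) :
    θ = 1 ↔ (θ = 1 ∧ L.mul g f = L.e ∧ g ∈ L.middleNucleus) := by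
  refine ⟨fun hθ => ?_, And.left⟩
  subst hθ
  have hA' : L.IsAutotopism (L.Rt g)⁻¹ (L.Lt f)⁻¹ 1 := hA
  exact ⟨rfl, hA'.mul_eq_e, hA'.mem_middleNucleus⟩

/-- Let `(G,·)` be a Smarandache loop with a fixed S-subgroup `H`,
and let `Φ : Ω(G,·) → SBS(G,·)` send each triple `(θR_g⁻¹, θL_f⁻¹, θ)` to `θ`.
Then a triple `A = (θR_g⁻¹, θL_f⁻¹, θ) ∈ Ω(G,·)` with `f, g ∈ H` lies in `ker Φ`
iff `θ` is the identity map on `G`, `g·f` is the identity element of `(G,·)`,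
and `g` lies in the middle nucleus `N_μ(G,·)`. -/
theorem mem_ker_iff {G : Type*} (L : Loop G) (H : Set G) (hH : L.IsSSubgroup H)
    (f g : G) (hf : f ∈ H) (hg : g ∈ H) (θ : Equiv.Perm G)
    (hθH : ∀ h ∈ H, θ h ∈ H)
    (hA : L.IsAutotopism (θ.trans (L.Rt g)⁻¹) (θ.trans (L.Lt f)⁻¹) θ) :
    θ = 1 ↔ (θ = 1 ∧ L.mul g f = L.e ∧ g ∈ L.middleNucleus) :=
  mem_ker_iff_general L f g θ hA
end

section
/- Let (G,·) be a finite GS-loop whose middle nucleus N_μ(G,·) has more than one element. Then, taking the S-subgroup H = N_μ(G,·), one has |H| = |SBS(G,·)| / |SA(G,·)|, and there exists a natural number n > 1 such that |G| = n·|SBS(G,·)| / |SA(G,·)|. -/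
namespace Loop

variable {G : Type*}

/-! For `c` in the middle nucleus `N`, the `c`-homotope `x ∘ y = x·(c·y)` is an isotope of `L`
with the same middle nucleus, so the GS-property yields an isomorphism `Θ_c` of `L` onto it.
The Smarandache special maps relative to `N` are exactly the isomorphisms of `L` onto these
homotopes, and an isomorphism onto the `c`-homotope sends `e` to `c⁻¹`; hence `(c, α) ↦ α Θ_c` is
a bijection `N × SA → SBS`. The second claim is Lagrange's theorem for the right cosets of `N`,
of which there are at least two because `N` is proper. -/

section Basic

variable (L : Loop G)

theorem mul_left_cancel {a x y : G} (h : L.mul a x = L.mul a y) : x = y :=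
  (L.mulLeft_bijective a).1 h

theorem mul_right_cancel {a x y : G} (h : L.mul x a = L.mul y a) : x = y :=
  (L.mulRight_bijective a).1 h

noncomputable def rinv (a : G) : G := (L.Lt a).symm L.e

theorem mul_rinv_cancel (a : G) : L.mul a (L.rinv a) = L.e :=
  (L.Lt a).apply_symm_apply L.e

theorem rinv_e : L.rinv L.e = L.e :=
  L.mul_left_cancel (a := L.e) (by rw [L.mul_rinv_cancel, L.mul_one])

theorem e_mem_middleNucleus : L.e ∈ L.middleNucleus := fun x y => by
  rw [L.one_mul, L.mul_one]

variable {L}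

theorem mul_mem_middleNucleus {a b : G} (ha : a ∈ L.middleNucleus)
    (hb : b ∈ L.middleNucleus) : L.mul a b ∈ L.middleNucleus := fun x y => by
  rw [← hb a y, ha x (L.mul b y), hb (L.mul x a) y, ha x b]

theorem rinv_mul_cancel {c : G} (hc : c ∈ L.middleNucleus) : L.mul (L.rinv c) c = L.e :=
  L.mul_right_cancel (a := L.rinv c) (by rw [← hc, L.mul_rinv_cancel, L.mul_one, L.one_mul])

theorem rinv_mul_cancel_left {c : G} (hc : c ∈ L.middleNucleus) (x : G) :
    L.mul (L.rinv c) (L.mul c x) = x := by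
  rw [hc, rinv_mul_cancel hc, L.one_mul]

theorem rinv_mul_cancel_right {c : G} (hc : c ∈ L.middleNucleus) (x : G) :
    L.mul (L.mul x (L.rinv c)) c = x :=
  L.mul_right_cancel (a := L.rinv c) (by rw [← hc, L.mul_rinv_cancel, L.mul_one])

theorem mul_rinv_cancel_right {c : G} (hc : c ∈ L.middleNucleus) (x : G) :
    L.mul (L.mul x c) (L.rinv c) = x := by
  rw [← hc, L.mul_rinv_cancel, L.mul_one]

theorem rinv_mem_middleNucleus {c : G} (hc : c ∈ L.middleNucleus) :
    L.rinv c ∈ L.middleNucleus := by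
  intro x y
  obtain ⟨z, rfl⟩ := (L.mulLeft_bijective c).2 y
  dsimp only
  rw [rinv_mul_cancel_left hc, hc, rinv_mul_cancel_right hc]

theorem mul_rinv_cancel_left {c : G} (hc : c ∈ L.middleNucleus) (x : G) :
    L.mul c (L.mul (L.rinv c) x) = x := by
  rw [rinv_mem_middleNucleus hc, L.mul_rinv_cancel, L.one_mul]

theorem rinv_rinv {c : G} (hc : c ∈ L.middleNucleus) : L.rinv (L.rinv c) = c :=
  L.mul_left_cancel (a := L.rinv c) (by rw [L.mul_rinv_cancel, rinv_mul_cancel hc])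

theorem Rt_inv_apply {g : G} (hg : g ∈ L.middleNucleus) (z : G) :
    (L.Rt g)⁻¹ z = L.mul z (L.rinv g) := by
  rw [Equiv.Perm.inv_def, Equiv.symm_apply_eq]
  exact (rinv_mul_cancel_right hg z).symm

theorem Lt_inv_apply {f : G} (hf : f ∈ L.middleNucleus) (z : G) :
    (L.Lt f)⁻¹ z = L.mul (L.rinv f) z := by
  rw [Equiv.Perm.inv_def, Equiv.symm_apply_eq]
  exact (mul_rinv_cancel_left hf z).symm

variable (L)

theorem isSSubgroup_middleNucleus (hnt : ∃ a ∈ L.middleNucleus, a ≠ L.e)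
    (hp : L.middleNucleus ≠ Set.univ) : L.IsSSubgroup L.middleNucleus where
  nontrivial := hnt
  proper := hp
  one_mem := L.e_mem_middleNucleus
  mul_mem _ ha _ hb := mul_mem_middleNucleus ha hb
  inv_mem a ha := ⟨L.rinv a, rinv_mem_middleNucleus ha, L.mul_rinv_cancel a, rinv_mul_cancel ha⟩
  mul_assoc a _ _ hb c _ := (hb a c).symm

end Basic

section Iso

def IsIso (L M : Loop G) (σ : Equiv.Perm G) : Prop :=
  ∀ x y, σ (L.mul x y) = M.mul (σ x) (σ y)

variable {L M K : Loop G} {σ τ : Equiv.Perm G}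

theorem IsIso.trans (hσ : L.IsIso M σ) (hτ : M.IsIso K τ) : L.IsIso K (σ.trans τ) :=
  fun x y => by
    show τ (σ _) = K.mul (τ (σ x)) (τ (σ y))
    rw [hσ, hτ]

theorem IsIso.symm (hσ : L.IsIso M σ) : M.IsIso L σ.symm := fun x y =>
  σ.injective (by rw [hσ, Equiv.apply_symm_apply, Equiv.apply_symm_apply, Equiv.apply_symm_apply])

theorem IsIso.map_e (hσ : L.IsIso M σ) : σ L.e = M.e :=
  M.mul_left_cancel (a := σ L.e) (by rw [← hσ, L.mul_one, M.mul_one])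

theorem IsIso.mapsTo_middleNucleus (hσ : L.IsIso M σ) :
    Set.MapsTo σ L.middleNucleus M.middleNucleus := by
  intro n hn x y
  obtain ⟨x, rfl⟩ := σ.surjective x
  obtain ⟨y, rfl⟩ := σ.surjective y
  rw [← hσ, ← hσ, ← hσ, ← hσ, hn]

theorem mem_SAset_middleNucleus_iff : σ ∈ L.SAset L.middleNucleus ↔ L.IsIso L σ :=
  ⟨And.right, fun hσ => ⟨hσ.mapsTo_middleNucleus, hσ⟩⟩

end Iso

section Homotope

variable (L : Loop G) {c : G}

noncomputable def homotope (c : G) (hc : c ∈ L.middleNucleus) : Loop G where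
  mul x y := L.mul x (L.mul c y)
  e := L.rinv c
  one_mul := rinv_mul_cancel_left hc
  mul_one x := by rw [L.mul_rinv_cancel, L.mul_one]
  exU_right a _ := ((L.mulLeft_bijective a).comp (L.mulLeft_bijective c)).existsUnique _
  exU_left a := L.exU_left (L.mul c a)

theorem homotope_isotope (hc : c ∈ L.middleNucleus) :
    ∃ U V W : Equiv.Perm G, ∀ x y, (L.homotope c hc).mul (U x) (V y) = W (L.mul x y) :=
  ⟨1, L.Lt (L.rinv c), 1, fun x y => congrArg (L.mul x) (mul_rinv_cancel_left hc y)⟩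

theorem middleNucleus_homotope (hc : c ∈ L.middleNucleus) :
    (L.homotope c hc).middleNucleus = L.middleNucleus := by
  ext n
  constructor
  · intro hn
    have hn' : ∀ x y, L.mul x (L.mul c (L.mul n (L.mul c y))) =
        L.mul (L.mul x (L.mul c n)) (L.mul c y) := hn
    have hcn_assoc : ∀ z, L.mul c (L.mul n z) = L.mul (L.mul c n) z := fun z => by
      simpa only [L.one_mul, mul_rinv_cancel_left hc] using hn' L.e (L.mul (L.rinv c) z)
    have hcn : L.mul c n ∈ L.middleNucleus := fun x z => by
      simpa only [hcn_assoc, mul_rinv_cancel_left hc] using hn' x (L.mul (L.rinv c) z)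
    rw [← rinv_mul_cancel_left hc n]
    exact mul_mem_middleNucleus (rinv_mem_middleNucleus hc) hcn
  · intro hn x y
    show L.mul x (L.mul c (L.mul n (L.mul c y))) = L.mul (L.mul x (L.mul c n)) (L.mul c y)
    rw [hn c, mul_mem_middleNucleus hc hn]

theorem isSSubgroup_homotope (hH : L.IsSSubgroup L.middleNucleus) (hc : c ∈ L.middleNucleus) :
    (L.homotope c hc).IsSSubgroup L.middleNucleus := by
  have hN := L.middleNucleus_homotope hc
  obtain ⟨a, ha, hae⟩ := hH.nontrivial
  refine hN ▸ (L.homotope c hc).isSSubgroup_middleNucleus ?_ (hN ▸ hH.proper)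
  -- the homotope's identity is `c⁻¹`, which cannot equal both `a` and `e`
  by_cases h : a = L.rinv c
  · exact ⟨L.e, hN ▸ L.e_mem_middleNucleus, fun he => hae (h.trans he.symm)⟩
  · exact ⟨a, hN ▸ ha, h⟩

theorem exists_isIso_homotope (hH : L.IsSSubgroup L.middleNucleus)
    (hGS : L.IsGSLoop L.middleNucleus) (hc : c ∈ L.middleNucleus) :
    ∃ θ, L.IsIso (L.homotope c hc) θ := by
  obtain ⟨-, -, θ, -, hθ⟩ :=
    hGS _ (L.homotope_isotope hc) ⟨_, L.isSSubgroup_homotope hH hc⟩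
  exact ⟨θ, hθ⟩

end Homotope

section SBS

variable (L : Loop G)

theorem mem_SBSset_middleNucleus_iff {θ : Equiv.Perm G} :
    θ ∈ L.SBSset L.middleNucleus ↔
      ∃ c, ∃ hc : c ∈ L.middleNucleus, L.IsIso (L.homotope c hc) θ := by
  constructor
  · rintro ⟨-, f, hf, g, hg, hθ⟩
    refine ⟨L.mul (L.rinv g) (L.rinv f),
      mul_mem_middleNucleus (rinv_mem_middleNucleus hg) (rinv_mem_middleNucleus hf),
      fun x y => ?_⟩
    have h := hθ x y
    rw [Equiv.trans_apply, Equiv.trans_apply, Rt_inv_apply hg, Lt_inv_apply hf] at h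
    show θ (L.mul x y) = L.mul (θ x) (L.mul (L.mul (L.rinv g) (L.rinv f)) (θ y))
    rw [← h, ← rinv_mem_middleNucleus hf (L.rinv g) (θ y), rinv_mem_middleNucleus hg]
  · rintro ⟨c, hc, hθ⟩
    refine ⟨L.middleNucleus_homotope hc ▸ hθ.mapsTo_middleNucleus, L.rinv c,
      rinv_mem_middleNucleus hc, L.e, L.e_mem_middleNucleus, fun x y => ?_⟩
    rw [Equiv.trans_apply, Equiv.trans_apply, Rt_inv_apply L.e_mem_middleNucleus,
      Lt_inv_apply (rinv_mem_middleNucleus hc), L.rinv_e, L.mul_one, rinv_rinv hc]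
    exact (hθ x y).symm

theorem card_SBSset_middleNucleus
    (hΘ : ∀ c (hc : c ∈ L.middleNucleus), ∃ θ, L.IsIso (L.homotope c hc) θ) :
    Nat.card (L.SBSset L.middleNucleus) =
      Nat.card L.middleNucleus * Nat.card (L.SAset L.middleNucleus) := by
  choose Θ hΘ using hΘ
  let Φ : L.middleNucleus × L.SAset L.middleNucleus → L.SBSset L.middleNucleus := fun p =>
    ⟨p.2.1.trans (Θ p.1 p.1.2), L.mem_SBSset_middleNucleus_iff.2
      ⟨p.1, p.1.2, (mem_SAset_middleNucleus_iff.1 p.2.2).trans (hΘ _ _)⟩⟩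
  have hΦ_e : ∀ p, (Φ p).1 L.e = L.rinv p.1 := fun p => by
    show Θ p.1 p.1.2 (p.2.1 L.e) = _
    rw [(mem_SAset_middleNucleus_iff.1 p.2.2).map_e, (hΘ _ _).map_e]
    rfl
  have hinj : Function.Injective Φ := by
    rintro ⟨⟨c, hc⟩, α⟩ ⟨⟨c', hc'⟩, α'⟩ h
    have hrinv : L.rinv c = L.rinv c' := by
      simpa only [hΦ_e] using congrArg (fun θ : L.SBSset L.middleNucleus => θ.1 L.e) h
    obtain rfl : c = c' := by rw [← rinv_rinv hc, hrinv, rinv_rinv hc']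
    refine Prod.ext rfl (Subtype.ext (Equiv.ext fun x => (Θ c hc).injective ?_))
    exact congrArg (fun θ : L.SBSset L.middleNucleus => θ.1 x) h
  have hsurj : Function.Surjective Φ := by
    rintro ⟨θ, hθ⟩
    obtain ⟨c, hc, hθ⟩ := L.mem_SBSset_middleNucleus_iff.1 hθ
    refine ⟨(⟨c, hc⟩, ⟨θ.trans (Θ c hc).symm,
      mem_SAset_middleNucleus_iff.2 (hθ.trans (hΘ c hc).symm)⟩), ?_⟩
    exact Subtype.ext (Equiv.ext fun x => (Θ c hc).apply_symm_apply (θ x))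
  rw [← Nat.card_prod]
  exact (Nat.card_congr (Equiv.ofBijective Φ ⟨hinj, hsurj⟩)).symm

end SBS

section Lagrange

variable (L : Loop G)

def rightCosetSetoid : Setoid G where
  r x y := ∃ h ∈ L.middleNucleus, L.mul x h = y
  iseqv := by
    refine ⟨fun x => ⟨L.e, L.e_mem_middleNucleus, L.mul_one x⟩, ?_, ?_⟩
    · rintro x _ ⟨h, hh, rfl⟩
      exact ⟨L.rinv h, rinv_mem_middleNucleus hh, mul_rinv_cancel_right hh x⟩
    · rintro x _ _ ⟨h, hh, rfl⟩ ⟨h', hh', rfl⟩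
      exact ⟨L.mul h h', mul_mem_middleNucleus hh hh', hh x h'⟩

theorem card_eq_card_quotient_mul_card_middleNucleus :
    Nat.card G = Nat.card (Quotient L.rightCosetSetoid) * Nat.card L.middleNucleus := by
  let φ : Quotient L.rightCosetSetoid × L.middleNucleus → G := fun p => L.mul p.1.out p.2
  have hinj : Function.Injective φ := by
    rintro ⟨t, h, hh⟩ ⟨u, h', hh'⟩ (hφ : L.mul t.out h = L.mul u.out h')
    obtain rfl : t = u := by
      rw [← t.out_eq, ← u.out_eq]
      refine Quotient.sound ⟨L.mul h (L.rinv h'),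
        mul_mem_middleNucleus hh (rinv_mem_middleNucleus hh'), ?_⟩
      rw [hh, hφ, mul_rinv_cancel_right hh']
    obtain rfl : h = h' := L.mul_left_cancel hφ
    rfl
  have hsurj : Function.Surjective φ := fun x => by
    obtain ⟨h, hh, hx⟩ := Quotient.mk_out (s := L.rightCosetSetoid) x
    exact ⟨(⟦x⟧, ⟨h, hh⟩), hx⟩
  rw [← Nat.card_prod]
  exact (Nat.card_congr (Equiv.ofBijective φ ⟨hinj, hsurj⟩)).symm

theorem one_lt_card_quotient_rightCosetSetoid [Finite G] (hp : L.middleNucleus ≠ Set.univ) :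
    1 < Nat.card (Quotient L.rightCosetSetoid) := by
  obtain ⟨x, hx⟩ := (Set.ne_univ_iff_exists_notMem _).1 hp
  rw [Finite.one_lt_card_iff_nontrivial]
  refine ⟨⟦L.e⟧, ⟦x⟧, fun h => hx ?_⟩
  obtain ⟨h, hh, rfl⟩ := Quotient.exact h
  rwa [L.one_mul]

end Lagrange

end Loop

theorem card_eq_of_nucleus_nontrivial_general {G : Type*} [Finite G] (L : Loop G)
    (hH : L.IsSSubgroup L.middleNucleus) (hGS : Loop.IsGSLoop L L.middleNucleus) :
    (Nat.card ↥(L.middleNucleus) : ℚ) =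
        (Nat.card ↥(L.SBSset L.middleNucleus) : ℚ) /
          (Nat.card ↥(L.SAset L.middleNucleus) : ℚ) ∧
      ∃ n : ℕ, 1 < n ∧
        (Nat.card G : ℚ) =
          n * (Nat.card ↥(L.SBSset L.middleNucleus) : ℚ) /
            (Nat.card ↥(L.SAset L.middleNucleus) : ℚ) := by
  have hSBS := L.card_SBSset_middleNucleus fun _ hc => L.exists_isIso_homotope hH hGS hc
  have hSA : (Nat.card (L.SAset L.middleNucleus) : ℚ) ≠ 0 := by
    have : Nonempty (L.SAset L.middleNucleus) := ⟨⟨1, fun _ hh => hh, fun _ _ => rfl⟩⟩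
    exact Nat.cast_ne_zero.2 Nat.card_pos.ne'
  refine ⟨?_, _, L.one_lt_card_quotient_rightCosetSetoid hH.proper, ?_⟩
  · rw [hSBS, Nat.cast_mul, mul_div_cancel_right₀ _ hSA]
  · rw [L.card_eq_card_quotient_mul_card_middleNucleus, hSBS]
    push_cast
    field_simp

/-- Let `(G,·)` be a finite GS-loop whose middle nucleus
`N_μ(G,·)` has more than one element. Then, taking the S-subgroup `H = N_μ(G,·)`,
one has `|H| = |SBS(G,·)| / |SA(G,·)|`, and there exists a natural number `n > 1`
with `|G| = n·|SBS(G,·)| / |SA(G,·)|`. -/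
theorem card_eq_of_nucleus_nontrivial {G : Type*} [Finite G] (L : Loop G)
    (hH : L.IsSSubgroup L.middleNucleus) (hGS : Loop.IsGSLoop L L.middleNucleus)
    (hcard : 1 < Nat.card ↥(L.middleNucleus)) :
    (Nat.card ↥(L.middleNucleus) : ℚ) =
        (Nat.card ↥(L.SBSset L.middleNucleus) : ℚ) /
          (Nat.card ↥(L.SAset L.middleNucleus) : ℚ) ∧
      ∃ n : ℕ, 1 < n ∧
        (Nat.card G : ℚ) =
          n * (Nat.card ↥(L.SBSset L.middleNucleus) : ℚ) /
            (Nat.card ↥(L.SAset L.middleNucleus) : ℚ) :=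
  card_eq_of_nucleus_nontrivial_general L hH hGS
end
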